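/- arXiv:2601.03837 — 3 statements merged into one kernel-verified Lean document; each statement's English description precedes it below -/
import Mathlib

section
/- The Korányi norm ‖(z,t)‖ = (|z|^4 + 16t^2)^{1/4} on the Heisenberg group H^n satisfies the triangle-type inequality under the group law: the function d(x,y) := ‖y^{-1}·x‖ defines a left-invariant metric on H^n; in particular d(z·x, z·y) = d(x,y) for all x, y, z ∈ H^n. -/
open scoped BigOperators

noncomputable section

/-- Points of the Heisenberg group ℍⁿ : pairs (z,t) with z ∈ ℝ^{2n}, t ∈ ℝ. -/
abbrev Hpt (n : ℕ) := (EuclideanSpace ℝ (Fin (2 * n))) × ℝ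

/-- The symplectic-type form ω(z,z') = (1/2) ∑ (z_i z'_{n+i} − z_{n+i} z'_i). -/
def omegaH (n : ℕ) (z z' : EuclideanSpace ℝ (Fin (2 * n))) : ℝ :=
  (1 / 2) * ∑ i : Fin n,
    (z ⟨i.1, by have := i.isLt; omega⟩ * z' ⟨n + i.1, by have := i.isLt; omega⟩ -
      z ⟨n + i.1, by have := i.isLt; omega⟩ * z' ⟨i.1, by have := i.isLt; omega⟩)

/-- Heisenberg group multiplication. -/
def hMul {n : ℕ} (x y : Hpt n) : Hpt n :=
  (x.1 + y.1, x.2 + y.2 + omegaH n x.1 y.1)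

/-- Heisenberg group inverse. -/
def hInv {n : ℕ} (x : Hpt n) : Hpt n := (-x.1, -x.2)

/-- Korányi norm ‖(z,t)‖ = (|z|⁴ + 16 t²)^{1/4}. -/
def kNorm {n : ℕ} (x : Hpt n) : ℝ := (‖x.1‖ ^ 4 + 16 * x.2 ^ 2) ^ ((1 : ℝ) / 4)

/-- Korányi distance d(x,y) = ‖y⁻¹ · x‖. -/
def kDist {n : ℕ} (x y : Hpt n) : ℝ := kNorm (hMul (hInv y) x)

/-- A subspace of ℝ^{2n} is isotropic if ω vanishes on it. -/
def IsIsotropic (n : ℕ) (K : Submodule ℝ (EuclideanSpace ℝ (Fin (2 * n)))) : Prop :=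
  ∀ z ∈ K, ∀ z' ∈ K, omegaH n z z' = 0

/-- Horizontal projection onto the horizontal subgroup V = K × {0}. -/
def PV {n : ℕ} (K : Submodule ℝ (EuclideanSpace ℝ (Fin (2 * n)))) (x : Hpt n) : Hpt n :=
  ((K.orthogonalProjection x.1 : EuclideanSpace ℝ (Fin (2 * n))), 0)

/-- Complementary vertical projection P_W(y) = (P_V y)⁻¹ · y. -/
def PW {n : ℕ} (K : Submodule ℝ (EuclideanSpace ℝ (Fin (2 * n)))) (x : Hpt n) : Hpt n :=
  hMul (hInv (PV K x)) x

/-- Membership in the horizontal subgroup V = K × {0}. -/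
def MemV {n : ℕ} (K : Submodule ℝ (EuclideanSpace ℝ (Fin (2 * n)))) (x : Hpt n) : Prop :=
  x.1 ∈ K ∧ x.2 = 0


variable {n : ℕ}

lemma omega_add_left (a b c : EuclideanSpace ℝ (Fin (2*n))) :
    omegaH n (a + b) c = omegaH n a c + omegaH n b c := by
  simp only [omegaH, PiLp.add_apply, ← mul_add, ← Finset.sum_add_distrib]
  congr 1
  exact Finset.sum_congr rfl fun i _ => by ring

lemma omega_add_right (a b c : EuclideanSpace ℝ (Fin (2*n))) :
    omegaH n a (b + c) = omegaH n a b + omegaH n a c := by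
  simp only [omegaH, PiLp.add_apply, ← mul_add, ← Finset.sum_add_distrib]
  congr 1
  exact Finset.sum_congr rfl fun i _ => by ring

lemma omega_neg_left (a c : EuclideanSpace ℝ (Fin (2*n))) :
    omegaH n (-a) c = - omegaH n a c := by
  simp only [omegaH, PiLp.neg_apply, ← mul_neg, ← Finset.sum_neg_distrib]
  congr 1
  exact Finset.sum_congr rfl fun i _ => by ring

lemma omega_self (a : EuclideanSpace ℝ (Fin (2*n))) : omegaH n a a = 0 := by
  have : omegaH n a a = (1/2) * ∑ i : Fin n, (0:ℝ) := by
    simp only [omegaH]; congr 1; exact Finset.sum_congr rfl fun i _ => by ring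
  simp [this]

lemma omega_antisymm (a b : EuclideanSpace ℝ (Fin (2*n))) :
    omegaH n a b = - omegaH n b a := by
  simp only [omegaH, ← mul_neg, ← Finset.sum_neg_distrib]
  congr 1
  exact Finset.sum_congr rfl fun i _ => by ring
lemma sum_split (n : ℕ) (f : Fin (2*n) → ℝ) :
    ∑ k, f k = (∑ i : Fin n, f ⟨i.1, by omega⟩) + ∑ i : Fin n, f ⟨n + i.1, by omega⟩ := by
  rw [← Equiv.sum_comp (finSumFinEquiv.trans (finCongr (show n+n=2*n by omega))) f,
    Fintype.sum_sum_type]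
  congr 1 <;> refine Finset.sum_congr rfl fun i _ => ?_ <;>
    · congr 1; ext; simp [finSumFinEquiv]

def Jmap (n : ℕ) (z : EuclideanSpace ℝ (Fin (2*n))) : EuclideanSpace ℝ (Fin (2*n)) :=
  WithLp.toLp 2 (fun k : Fin (2*n) => if h : (k : ℕ) < n then z ⟨n + k.1, by omega⟩
    else -z ⟨k.1 - n, by have := k.isLt; omega⟩)

lemma inner_J (z z' : EuclideanSpace ℝ (Fin (2*n))) :
    (inner ℝ z (Jmap n z') : ℝ) = 2 * omegaH n z z' := by
  rw [PiLp.inner_apply]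
  simp only [RCLike.inner_apply, conj_trivial]
  rw [sum_split n (fun k => (Jmap n z') k * z k)]
  have h1 : ∀ i : Fin n, (Jmap n z') ⟨i.1, by omega⟩ = z' ⟨n + i.1, by omega⟩ := fun i => by
    simp [Jmap, i.isLt]
  have h2 : ∀ i : Fin n, (Jmap n z') ⟨n + i.1, by omega⟩ = -z' ⟨i.1, by omega⟩ := fun i => by
    have : ¬ (n + i.1 < n) := by omega
    simp only [Jmap, PiLp.toLp_apply, this, dif_neg, not_false_iff]
    exact congrArg (fun j => -z' j) (Fin.mk_eq_mk.mpr (by omega))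
  simp only [h1, h2, omegaH, mul_neg, Finset.sum_neg_distrib, Finset.sum_sub_distrib]
  rw [← Finset.sum_sub_distrib, ← Finset.sum_add_distrib, ← mul_assoc,
    show (2:ℝ) * (1/2) = 1 by norm_num, one_mul]
  exact Finset.sum_congr rfl fun i _ => by ring
lemma inner_J_self (z' : EuclideanSpace ℝ (Fin (2*n))) :
    (inner ℝ z' (Jmap n z') : ℝ) = 0 := by
  rw [inner_J, omega_self, mul_zero]
lemma J_norm (z' : EuclideanSpace ℝ (Fin (2*n))) :
    (inner ℝ (Jmap n z') (Jmap n z') : ℝ) = inner ℝ z' z' := by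
  rw [PiLp.inner_apply, PiLp.inner_apply]
  simp only [RCLike.inner_apply, conj_trivial]
  rw [sum_split n (fun k => (Jmap n z') k * (Jmap n z') k),
    sum_split n (fun k => z' k * z' k)]
  have h1 : ∀ i : Fin n, (Jmap n z') ⟨i.1, by omega⟩ = z' ⟨n + i.1, by omega⟩ := fun i => by
    simp [Jmap, i.isLt]
  have h2 : ∀ i : Fin n, (Jmap n z') ⟨n + i.1, by omega⟩ = -z' ⟨i.1, by omega⟩ := fun i => by
    have : ¬ (n + i.1 < n) := by omega
    simp only [Jmap, PiLp.toLp_apply, this, dif_neg, not_false_iff]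
    exact congrArg (fun j => -z' j) (Fin.mk_eq_mk.mpr (by omega))
  simp only [h1, h2, neg_mul_neg]
  ring

lemma key_ineq (z z' : EuclideanSpace ℝ (Fin (2*n))) :
    (inner ℝ z z' : ℝ)^2 + 4 * (omegaH n z z')^2 ≤ ‖z‖^2 * ‖z'‖^2 := by
  set p : ℝ := inner ℝ z z' with hp
  set w : ℝ := omegaH n z z' with hw
  set u : EuclideanSpace ℝ (Fin (2*n)) := p • z' + (2*w) • Jmap n z' with hu
  set S : ℝ := p^2 + 4*w^2 with hS
  have hSnn : 0 ≤ S := by positivity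
  have hzu : (inner ℝ z u : ℝ) = S := by
    rw [hu, inner_add_right, real_inner_smul_right, real_inner_smul_right, inner_J, ← hp, ← hw,
      hS]
    ring
  have huu : (inner ℝ u u : ℝ) = S * ‖z'‖^2 := by
    rw [hu]
    rw [real_inner_add_add_self]
    rw [real_inner_smul_left, real_inner_smul_right, real_inner_smul_left,
      real_inner_smul_right, real_inner_smul_left, real_inner_smul_right,
      inner_J_self, J_norm, real_inner_self_eq_norm_sq]
    ring
  have hcs : (inner ℝ z u : ℝ) ≤ ‖z‖ * ‖u‖ := real_inner_le_norm z u
  have hun : ‖u‖^2 = S * ‖z'‖^2 := by rw [← real_inner_self_eq_norm_sq, huu]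
  rcases eq_or_lt_of_le hSnn with h0 | hpos
  · nlinarith [sq_nonneg (‖z‖ * ‖z'‖)]
  · have h1 : S ≤ ‖z‖ * ‖u‖ := by rw [← hzu]; exact hcs
    have h2 : S^2 ≤ (‖z‖ * ‖u‖)^2 := by
      apply sq_le_sq' <;> nlinarith [norm_nonneg z, norm_nonneg u]
    have : S^2 ≤ ‖z‖^2 * (S * ‖z'‖^2) := by nlinarith [hun]
    nlinarith

lemma quarter_eq (c : ℝ) (hc : 0 ≤ c) : c ^ ((1:ℝ)/4) = Real.sqrt (Real.sqrt c) := by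
  rw [Real.sqrt_eq_rpow, Real.sqrt_eq_rpow, ← Real.rpow_mul hc]
  norm_num

lemma kNorm_nonneg {n : ℕ} (x : Hpt n) : 0 ≤ kNorm x :=
  Real.rpow_nonneg (by positivity) _

lemma kNorm_mul_le {n : ℕ} (x y : Hpt n) : kNorm (hMul x y) ≤ kNorm x + kNorm y := by
  set a := ‖x.1‖ with ha
  set b := ‖y.1‖ with hb
  set p : ℝ := inner ℝ x.1 y.1 with hp
  set w : ℝ := omegaH n x.1 y.1 with hw
  have hann : 0 ≤ a := norm_nonneg _
  have hbnn : 0 ≤ b := norm_nonneg _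
  set c1 : ℂ := ⟨a^2, 4*x.2⟩ with hc1
  set c2 : ℂ := ⟨b^2, 4*y.2⟩ with hc2
  set c3 : ℂ := ⟨2*p, 4*w⟩ with hc3
  set A := ‖c1‖ with hA
  set B := ‖c2‖ with hB
  have hAnn : 0 ≤ A := norm_nonneg _
  have hBnn : 0 ≤ B := norm_nonneg _
  have habs3 : ‖c3‖ ≤ 2*(a*b) := by
    rw [Complex.norm_def, Complex.normSq_mk]
    have h1 : 2*p*(2*p) + 4*w*(4*w) ≤ (2*(a*b))^2 := by
      have := key_ineq x.1 y.1
      rw [← hp, ← hw, ← ha, ← hb] at this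
      nlinarith
    calc Real.sqrt (2*p*(2*p) + 4*w*(4*w)) ≤ Real.sqrt ((2*(a*b))^2) :=
          Real.sqrt_le_sqrt h1
      _ = 2*(a*b) := Real.sqrt_sq (by positivity)
  have ha2 : a^2 ≤ A := by
    rw [hA, Complex.norm_def, Complex.normSq_mk]
    calc a^2 = Real.sqrt ((a^2)^2) := (Real.sqrt_sq (by positivity)).symm
      _ ≤ _ := Real.sqrt_le_sqrt (by nlinarith)
  have hb2 : b^2 ≤ B := by
    rw [hB, Complex.norm_def, Complex.normSq_mk]
    calc b^2 = Real.sqrt ((b^2)^2) := (Real.sqrt_sq (by positivity)).symm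
      _ ≤ _ := Real.sqrt_le_sqrt (by nlinarith)
  have hab : a*b ≤ Real.sqrt A * Real.sqrt B := by
    have h1 : a ≤ Real.sqrt A := by
      rw [show a = Real.sqrt (a^2) from (Real.sqrt_sq hann).symm]
      exact Real.sqrt_le_sqrt ha2
    have h2 : b ≤ Real.sqrt B := by
      rw [show b = Real.sqrt (b^2) from (Real.sqrt_sq hbnn).symm]
      exact Real.sqrt_le_sqrt hb2
    exact mul_le_mul h1 h2 hbnn (Real.sqrt_nonneg _)
  have tri : ‖c1+c2+c3‖ ≤ (Real.sqrt A + Real.sqrt B)^2 := by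
    calc ‖c1+c2+c3‖ ≤ ‖c1+c2‖ + ‖c3‖ :=
          norm_add_le _ _
      _ ≤ (A + B) + 2*(a*b) := by
          have := norm_add_le c1 c2
          linarith [habs3]
      _ ≤ A + B + 2*(Real.sqrt A * Real.sqrt B) := by linarith [hab]
      _ = (Real.sqrt A + Real.sqrt B)^2 := by
          rw [add_sq, Real.sq_sqrt hAnn, Real.sq_sqrt hBnn]; ring
  have hbase : ‖x.1 + y.1‖^4 + 16*(x.2+y.2+w)^2 = Complex.normSq (c1+c2+c3) := by
    have h := norm_add_sq_real x.1 y.1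
    rw [← ha, ← hb, ← hp] at h
    have h4 : ‖x.1 + y.1‖^4 = (a^2 + 2*p + b^2)^2 := by
      rw [show (4:ℕ) = 2*2 from rfl, pow_mul, h]
    rw [h4]
    simp only [Complex.normSq_apply, Complex.add_re, Complex.add_im, hc1, hc2, hc3]
    ring
  have hkxy : kNorm (hMul x y) = Real.sqrt (‖c1+c2+c3‖) := by
    rw [kNorm, hMul, quarter_eq _ (by positivity)]
    simp only
    rw [← hw, hbase, Complex.norm_def]
  have hkx : kNorm x = Real.sqrt A := by
    rw [kNorm, quarter_eq _ (by positivity), hA, Complex.norm_def]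
    congr 2
    simp only [Complex.normSq_mk, hc1]
    ring
  have hky : kNorm y = Real.sqrt B := by
    rw [kNorm, quarter_eq _ (by positivity), hB, Complex.norm_def]
    congr 2
    simp only [Complex.normSq_mk, hc2]
    ring
  rw [hkxy, hkx, hky]
  calc Real.sqrt (‖c1+c2+c3‖) ≤ Real.sqrt ((Real.sqrt A + Real.sqrt B)^2) :=
        Real.sqrt_le_sqrt tri
    _ = Real.sqrt A + Real.sqrt B := Real.sqrt_sq (by positivity)

lemma omega_neg_right {n : ℕ} (a c : EuclideanSpace ℝ (Fin (2*n))) :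
    omegaH n a (-c) = - omegaH n a c := by
  rw [omega_antisymm, omega_neg_left, omega_antisymm c a]
  ring

lemma hMul_assoc_inv {n : ℕ} (x y z : Hpt n) :
    hMul (hMul (hInv z) y) (hMul (hInv y) x) = hMul (hInv z) x := by
  refine Prod.ext ?_ ?_
  · show (-z.1 + y.1) + (-y.1 + x.1) = -z.1 + x.1
    abel
  · show (-z.2 + y.2 + omegaH n (-z.1) y.1) + (-y.2 + x.2 + omegaH n (-y.1) x.1) +
      omegaH n (-z.1 + y.1) (-y.1 + x.1) = -z.2 + x.2 + omegaH n (-z.1) x.1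
    simp only [omega_add_left, omega_add_right, omega_neg_left, omega_neg_right, omega_self]
    linarith [omega_antisymm y.1 z.1, omega_antisymm y.1 x.1, omega_antisymm z.1 y.1]

lemma hMul_left_cancel {n : ℕ} (x y z : Hpt n) :
    hMul (hInv (hMul z y)) (hMul z x) = hMul (hInv y) x := by
  refine Prod.ext ?_ ?_
  · show -(z.1 + y.1) + (z.1 + x.1) = -y.1 + x.1
    abel
  · show -(z.2 + y.2 + omegaH n z.1 y.1) + (z.2 + x.2 + omegaH n z.1 x.1) +
      omegaH n (-(z.1 + y.1)) (z.1 + x.1) = -y.2 + x.2 + omegaH n (-y.1) x.1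
    simp only [omega_add_left, omega_add_right, omega_neg_left, omega_neg_right, omega_self]
    linarith [omega_antisymm y.1 z.1]

theorem koranyi_left_invariant_metric (n : ℕ) :
    (∀ x y : Hpt n, 0 ≤ kDist x y) ∧
    (∀ x y : Hpt n, kDist x y = 0 ↔ x = y) ∧
    (∀ x y : Hpt n, kDist x y = kDist y x) ∧
    (∀ x y z : Hpt n, kDist x z ≤ kDist x y + kDist y z) ∧
    (∀ x y z : Hpt n, kDist (hMul z x) (hMul z y) = kDist x y) := by
  refine ⟨fun x y => kNorm_nonneg _, ?_, ?_, ?_, ?_⟩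
  · intro x y
    constructor
    · intro h
      rw [kDist] at h
      set v := hMul (hInv y) x with hv
      have hb : ‖v.1‖^4 + 16*v.2^2 = 0 := by
        by_contra hne
        have h0 : (0:ℝ) < ‖v.1‖^4 + 16*v.2^2 := lt_of_le_of_ne (by positivity) (Ne.symm hne)
        have := Real.rpow_pos_of_pos h0 ((1:ℝ)/4)
        rw [kNorm] at h
        linarith
      have h14 : ‖v.1‖^4 = 0 := by nlinarith [sq_nonneg v.2, pow_nonneg (norm_nonneg v.1) 4]
      have h1 : ‖v.1‖ = 0 := by
        have := pow_eq_zero_iff (n := 4) (by norm_num) |>.mp h14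
        exact this
      have h2 : v.2 = 0 := by nlinarith
      have hx1 : x.1 = y.1 := by
        have h1' : ‖(-y.1 + x.1 : EuclideanSpace ℝ (Fin (2*n)))‖ = 0 := h1
        have := norm_eq_zero.mp h1'
        have := neg_add_eq_zero.mp this
        exact this.symm
      have hx2 : x.2 = y.2 := by
        have h2' : -y.2 + x.2 + omegaH n (-y.1) x.1 = 0 := h2
        rw [hx1, omega_neg_left, omega_self] at h2'
        linarith
      exact Prod.ext hx1 hx2
    · rintro rfl
      rw [kDist]
      have hxx : hMul (hInv x) x = (0, 0) := by
        refine Prod.ext ?_ ?_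
        · show -x.1 + x.1 = 0
          abel
        · show -x.2 + x.2 + omegaH n (-x.1) x.1 = 0
          rw [omega_neg_left, omega_self]
          ring
      rw [hxx, kNorm]
      norm_num
  · intro x y
    rw [kDist, kDist]
    have h2 : (hMul (hInv x) y).2 = -((hMul (hInv y) x).2) := by
      show -x.2 + y.2 + omegaH n (-x.1) y.1 = -(-y.2 + x.2 + omegaH n (-y.1) x.1)
      rw [omega_neg_left, omega_neg_left]
      linarith [omega_antisymm x.1 y.1]
    have h1 : ‖(hMul (hInv y) x).1‖ = ‖(hMul (hInv x) y).1‖ := by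
      show ‖(-y.1 + x.1 : EuclideanSpace ℝ (Fin (2*n)))‖ = ‖-x.1 + y.1‖
      rw [← norm_neg]
      congr 1
      abel
    rw [kNorm, kNorm, h1, h2, neg_sq]
  · intro x y z
    have hstep : kDist x z = kNorm (hMul (hMul (hInv z) y) (hMul (hInv y) x)) := by
      rw [kDist, hMul_assoc_inv]
    rw [hstep, kDist, kDist]
    exact (kNorm_mul_le _ _).trans_eq (add_comm _ _)
  · intro x y z
    rw [kDist, kDist, hMul_left_cancel]
end
end

section
/- Let V = V_I × {0} be a horizontal subgroup of H^n with V_I isotropic, and P_V(z,t) = (π_{V_I}(z),0) the horizontal projection. Then P_V is 1-Lipschitz with respect to the Korányi distance: d(P_V(x), P_V(y)) ≤ d(x,y) for all x, y ∈ H^n. -/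
open scoped BigOperators

noncomputable section

theorem horizontal_projection_lipschitz (n : ℕ)
    (K : Submodule ℝ (EuclideanSpace ℝ (Fin (2 * n))))
    (hK : IsIsotropic n K) (x y : Hpt n) :
    kDist (PV K x) (PV K y) ≤ kDist x y := by
  have quart : ∀ a : ℝ, 0 ≤ a → (a ^ 4) ^ ((1 : ℝ) / 4) = a := by
    intro a ha
    rw [← Real.rpow_natCast a 4, ← Real.rpow_mul ha]
    norm_num
  set E := EuclideanSpace ℝ (Fin (2 * n))
  have hω : omegaH n (-((K.orthogonalProjection y.1 : E))) (K.orthogonalProjection x.1 : E) = 0 :=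
    hK _ (K.neg_mem (K.orthogonalProjection y.1).2) _ (K.orthogonalProjection x.1).2
  have h1 : kDist (PV K x) (PV K y)
      = ‖((K.orthogonalProjection x.1 : E)) - ((K.orthogonalProjection y.1 : E))‖ := by
    simp only [kDist, kNorm, PV, hMul, hInv, hω]
    rw [neg_add_eq_sub]
    norm_num
    exact quart _ (norm_nonneg _)
  have h2 : ‖((K.orthogonalProjection x.1 : E)) - ((K.orthogonalProjection y.1 : E))‖
      ≤ ‖x.1 - y.1‖ := by
    have : ((K.orthogonalProjection x.1 : E)) - ((K.orthogonalProjection y.1 : E))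
        = ((K.orthogonalProjection (x.1 - y.1) : E)) := by
      rw [map_sub]; rfl
    rw [this]
    calc ‖((K.orthogonalProjection (x.1 - y.1) : E))‖
        = ‖K.orthogonalProjection (x.1 - y.1)‖ := rfl
      _ ≤ ‖(K.orthogonalProjection : E →L[ℝ] K)‖ * ‖x.1 - y.1‖ :=
          (K.orthogonalProjection).le_opNorm _
      _ ≤ 1 * ‖x.1 - y.1‖ := by
          gcongr; exact Submodule.orthogonalProjectionOnto_norm_le K
      _ = ‖x.1 - y.1‖ := one_mul _
  have h3 : ‖x.1 - y.1‖ ≤ kDist x y := by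
    have hfst : (hMul (hInv y) x).1 = x.1 - y.1 := by
      simp [hMul, hInv, neg_add_eq_sub]
    unfold kDist kNorm
    rw [hfst]
    calc ‖x.1 - y.1‖ = (‖x.1 - y.1‖ ^ 4) ^ ((1:ℝ)/4) := (quart _ (norm_nonneg _)).symm
      _ ≤ (‖x.1 - y.1‖ ^ 4 + 16 * (hMul (hInv y) x).2 ^ 2) ^ ((1:ℝ)/4) := by
          apply Real.rpow_le_rpow (by positivity) _ (by norm_num)
          nlinarith [sq_nonneg ((hMul (hInv y) x).2)]
  rw [h1]
  exact le_trans h2 h3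
end
end

section
/- Let V be a horizontal subgroup of H^n with complementary orthogonal subgroup W, and let Φ(v) = v·φ(v) be the graph map of φ : V → W. Suppose Φ is (1+η)-Lipschitz with respect to the Korányi metric for some 0 < η ≤ 1. Then for all v, v' ∈ V: |π(φ(v)) − π(φ(v'))| ≤ 2√η |π(v) − π(v')|, where π(z,t) = z is the coordinate projection. -/
open scoped BigOperators RealInnerProductSpace

noncomputable section

theorem graph_lip_horizontal_component (n : ℕ)
    (K : Submodule ℝ (EuclideanSpace ℝ (Fin (2 * n))))
    (hK : IsIsotropic n K) (φ : Hpt n → Hpt n) (η : ℝ)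
    (hη0 : 0 < η) (hη1 : η ≤ 1)
    (hφW : ∀ v : Hpt n, MemV K v → (φ v).1 ∈ Kᗮ)
    (hLip : ∀ v v' : Hpt n, MemV K v → MemV K v' →
      kNorm (hMul (hInv (hMul v' (φ v'))) (hMul v (φ v))) ≤ (1 + η) * ‖v.1 - v'.1‖) :
    ∀ v v' : Hpt n, MemV K v → MemV K v' →
      ‖(φ v).1 - (φ v').1‖ ≤ 2 * Real.sqrt η * ‖v.1 - v'.1‖ := by

  intro v v' hv hv'
  set a := v.1 - v'.1 with ha_def
  set b := (φ v).1 - (φ v').1 with hb_def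
  have ha : a ∈ K := K.sub_mem hv.1 hv'.1
  have hb : b ∈ Kᗮ := Submodule.sub_mem _ (hφW v hv) (hφW v' hv')
  have hinner : (inner ℝ a b : ℝ) = 0 := (Submodule.mem_orthogonal K b).mp hb a ha
  set X := hMul (hInv (hMul v' (φ v'))) (hMul v (φ v)) with hX_def
  have hX1 : X.1 = a + b := by
    simp only [hX_def, hMul, hInv, ha_def, hb_def]
    abel
  have hbase : (0:ℝ) ≤ ‖X.1‖ ^ 4 + 16 * X.2 ^ 2 := by positivity
  have hk0 : 0 ≤ kNorm X := Real.rpow_nonneg hbase _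
  have hk4 : kNorm X ^ 4 = ‖X.1‖ ^ 4 + 16 * X.2 ^ 2 := by
    rw [kNorm, ← Real.rpow_natCast (_ ^ ((1:ℝ)/4)) 4, ← Real.rpow_mul hbase]
    norm_num
  have h14 : ‖X.1‖ ^ 4 ≤ kNorm X ^ 4 := by
    rw [hk4]; nlinarith [sq_nonneg X.2]
  have h1 : ‖X.1‖ ≤ kNorm X := le_of_pow_le_pow_left₀ (by norm_num) hk0 h14
  have h2 : ‖a + b‖ ≤ (1 + η) * ‖a‖ := by
    rw [← hX1]
    exact h1.trans (hLip v v' hv hv')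
  have hsq : ‖a + b‖ ^ 2 = ‖a‖ ^ 2 + ‖b‖ ^ 2 := by
    rw [norm_add_sq_real, hinner]; ring
  have hb2 : ‖b‖ ^ 2 ≤ 4 * η * ‖a‖ ^ 2 := by
    have h3 : ‖a + b‖ ^ 2 ≤ ((1 + η) * ‖a‖) ^ 2 := by
      have := mul_self_le_mul_self (norm_nonneg (a+b)) h2
      nlinarith
    rw [hsq] at h3
    nlinarith [norm_nonneg a, sq_nonneg ‖a‖, sq_nonneg (η - 1)]
  have hrhs : 0 ≤ 2 * Real.sqrt η * ‖a‖ := by positivity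
  have hsqrt : (2 * Real.sqrt η * ‖a‖) ^ 2 = 4 * η * ‖a‖ ^ 2 := by
    rw [mul_pow, mul_pow, Real.sq_sqrt hη0.le]; ring
  exact le_of_pow_le_pow_left₀ two_ne_zero hrhs (by rw [hsqrt]; exact hb2)
end
end
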